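/- Let φ(x) = min_{i∈I} max_{j∈Jᵢ} ρ(aᵢⱼ·x) be a homogeneous normal-form McNaughton function in one variable on [0,1], with all aᵢⱼ ∈ ℤ. Then either φ is identically zero on [0,1], or there exist a positive integer a and δ > 0 such that φ(x) = a·x for all x ∈ [0, δ] ∩ [0,1]. -/
import Mathlib


/-- The truncation function `ρ(y) = max(0, min(1, y))`. -/
noncomputable def rho (y : ℝ) : ℝ := max 0 (min 1 y)

/-- The one-variable normal-form McNaughton function
`φ(x) = min_i max_j ρ(aᵢⱼ·x + bᵢⱼ)` with integer data `a`, `b`. -/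
noncomputable def mcN1 (k : ℕ) (m : Fin (k + 1) → ℕ)
    (a b : (i : Fin (k + 1)) → Fin (m i + 1) → ℤ) (x : ℝ) : ℝ :=
  Finset.univ.inf' Finset.univ_nonempty fun i =>
    Finset.univ.sup' Finset.univ_nonempty fun j =>
      rho ((a i j : ℝ) * x + (b i j : ℝ))

lemma rho_nonneg (y : ℝ) : 0 ≤ rho y := le_max_left _ _

lemma rho_of_nonpos {y : ℝ} (h : y ≤ 0) : rho y = 0 :=
  max_eq_left ((min_le_right _ _).trans h)

lemma rho_of_le_one {y : ℝ} (h : y ≤ 1) : rho y = max 0 y := by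
  rw [rho, min_eq_right h]

/-- Every homogeneous one-variable normal-form McNaughton function is either
identically zero on `[0,1]`, or equals `a·x` near `0` for some positive integer `a`. -/
theorem stmt12 (k : ℕ) (m : Fin (k + 1) → ℕ)
    (a : (i : Fin (k + 1)) → Fin (m i + 1) → ℤ) :
    (∀ x ∈ Set.Icc (0 : ℝ) 1, mcN1 k m a (fun _ _ => 0) x = 0) ∨
    ∃ (A : ℤ) (δ : ℝ), 0 < A ∧ 0 < δ ∧
      ∀ x ∈ Set.Icc (0 : ℝ) δ ∩ Set.Icc (0 : ℝ) 1,
        mcN1 k m a (fun _ _ => 0) x = (A : ℝ) * x := by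
  set A : Fin (k + 1) → ℤ := fun i => Finset.univ.sup' Finset.univ_nonempty (a i) with hA
  by_cases h : ∃ i, A i ≤ 0
  · left
    obtain ⟨i0, hi0⟩ := h
    rintro x ⟨hx0, hx1⟩
    unfold mcN1
    apply le_antisymm
    · refine le_trans (Finset.inf'_le _ (Finset.mem_univ i0)) ?_
      apply Finset.sup'_le
      intro j _
      have hj : (a i0 j : ℝ) ≤ 0 := by
        have h1 : a i0 j ≤ A i0 := Finset.le_sup' (a i0) (Finset.mem_univ j)
        exact_mod_cast h1.trans hi0
      have : (a i0 j : ℝ) * x + ((0 : ℤ) : ℝ) ≤ 0 := by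
        push_cast; nlinarith
      rw [rho_of_nonpos this]
    · apply Finset.le_inf'
      intro i _
      exact le_trans (rho_nonneg _)
        (Finset.le_sup' (fun j => rho ((a i j : ℝ) * x + ((0 : ℤ) : ℝ)))
          (Finset.mem_univ (0 : Fin (m i + 1))))
  · push_neg at h
    right
    set Amax : ℤ := Finset.univ.sup' Finset.univ_nonempty A with hAmax
    set Amin : ℤ := Finset.univ.inf' Finset.univ_nonempty A with hAmin
    have hAmaxpos : 0 < Amax :=
      lt_of_lt_of_le (h ⟨0, Nat.succ_pos _⟩) (Finset.le_sup' A (Finset.mem_univ _))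
    have hAminpos : 0 < Amin := by
      obtain ⟨i, -, hi⟩ := Finset.exists_mem_eq_inf' Finset.univ_nonempty A
      rw [hAmin, hi]; exact h i
    refine ⟨Amin, 1 / (Amax : ℝ), hAminpos, by positivity, ?_⟩
    rintro x ⟨⟨hx0, hxδ⟩, -, hx1⟩
    have hAmaxR : (0 : ℝ) < (Amax : ℝ) := by exact_mod_cast hAmaxpos
    -- each term a i j * x ≤ 1
    have key : ∀ i j, (a i j : ℝ) * x ≤ 1 := by
      intro i j
      have h1 : (a i j : ℝ) ≤ (Amax : ℝ) := by
        have : a i j ≤ Amax :=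
          le_trans (Finset.le_sup' (a i) (Finset.mem_univ j))
            (Finset.le_sup' A (Finset.mem_univ i))
        exact_mod_cast this
      have h2 : (Amax : ℝ) * x ≤ 1 := by
        have h3 := mul_le_mul_of_nonneg_left hxδ hAmaxR.le
        rwa [mul_one_div, div_self hAmaxR.ne'] at h3
      calc (a i j : ℝ) * x ≤ (Amax : ℝ) * x := mul_le_mul_of_nonneg_right h1 hx0
        _ ≤ 1 := h2
    unfold mcN1
    have hsup : ∀ i, (Finset.univ.sup' Finset.univ_nonempty fun j =>
        rho ((a i j : ℝ) * x + ((0 : ℤ) : ℝ))) = (A i : ℝ) * x := by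
      intro i
      apply le_antisymm
      · apply Finset.sup'_le
        intro j _
        rw [show ((0 : ℤ) : ℝ) = 0 by norm_num, add_zero,
          rho_of_le_one (key i j)]
        apply max_le
        · have : (0 : ℝ) ≤ (A i : ℝ) := by exact_mod_cast (h i).le
          positivity
        · have h1 : (a i j : ℝ) ≤ (A i : ℝ) := by
            exact_mod_cast Finset.le_sup' (a i) (Finset.mem_univ j)
          exact mul_le_mul_of_nonneg_right h1 hx0
      · obtain ⟨j, -, hj⟩ := Finset.exists_mem_eq_sup' Finset.univ_nonempty (a i)
        refine le_trans ?_ (Finset.le_sup' _ (Finset.mem_univ j))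
        rw [show ((0 : ℤ) : ℝ) = 0 by norm_num, add_zero,
          rho_of_le_one (key i j)]
        have : (a i j : ℝ) = (A i : ℝ) := by rw [hA]; exact_mod_cast hj.symm
        rw [this]
        exact le_max_right _ _
    calc (Finset.univ.inf' Finset.univ_nonempty fun i =>
          Finset.univ.sup' Finset.univ_nonempty fun j =>
            rho ((a i j : ℝ) * x + ((0 : ℤ) : ℝ)))
        = Finset.univ.inf' Finset.univ_nonempty fun i => (A i : ℝ) * x := by
          exact Finset.inf'_congr _ rfl fun i _ => hsup i
      _ = (Amin : ℝ) * x := by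
          apply le_antisymm
          · obtain ⟨i, -, hi⟩ := Finset.exists_mem_eq_inf' Finset.univ_nonempty A
            refine le_trans (Finset.inf'_le _ (Finset.mem_univ i)) ?_
            have : (A i : ℝ) = (Amin : ℝ) := by exact_mod_cast hi.symm
            rw [this]
          · apply Finset.le_inf'
            intro i _
            have : (Amin : ℝ) ≤ (A i : ℝ) := by
              exact_mod_cast Finset.inf'_le A (Finset.mem_univ i)
            exact mul_le_mul_of_nonneg_right this hx0
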